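/- There exists δ₀ with 0 < δ₀ < π/4 such that for every δ ∈ (0, δ₀) and every t ∈ [δ, π/2 − δ], the function ε₀(t) = (t − δ)³ · (12(π − 3δ − t)·cos δ − (π − 4δ)(2π − 5δ − 3t)·sin δ) / (3(π − 4δ)³) satisfies iteratedDeriv 2 ε₀ t ≥ 0 (i.e. ε₀ is convex on [δ, π/2 − δ] for all sufficiently small δ > 0). -/

import Mathlib

open Real

/-- The explicit polynomial middle piece of the profile-modification function. -/
noncomputable def eps0 (δ t : ℝ) : ℝ :=
  (t - δ) ^ 3 *
    (12 * (π - 3 * δ - t) * Real.cos δ - (π - 4 * δ) * (2 * π - 5 * δ - 3 * t) * Real.sin δ) /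
    (3 * (π - 4 * δ) ^ 3)

/-!
Write `ε₀(t) = (t - δ)³ ℓ(t) / D` with `ℓ` affine and `D = 3(π - 4δ)³ > 0`. For any affine `ℓ`,
`((t - a)³ ℓ(t))'' = 6 (t - a) ℓ(2t - a)`, and as `t` runs over `[δ, π/2 - δ]` the point `2t - δ`
runs over `[δ, π - 3δ]`. An affine function is nonnegative on an interval once it is at both ends,
and `ℓ(π - 3δ) = (π - 4δ)² sin δ`, `ℓ(δ) = (π - 4δ)(12 cos δ - 2(π - 4δ) sin δ)` are both
nonnegative for small `δ`.
-/

theorem iteratedDeriv_two_cube_mul_affine {g : ℝ → ℝ} {b c : ℝ} (hg : ∀ x, g x = b + c * x)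
    (a t : ℝ) :
    iteratedDeriv 2 (fun x => (x - a) ^ 3 * g x) t = 6 * (t - a) * g (2 * t - a) := by
  have hderiv : ∀ x, HasDerivAt (fun x => (x - a) ^ 3 * (b + c * x))
      (3 * (x - a) ^ 2 * (b + c * x) + (x - a) ^ 3 * c) x := fun x => by
    simpa using (((hasDerivAt_id' x).sub_const a).fun_pow 3).fun_mul
      (((hasDerivAt_id' x).const_mul c).const_add b)
  have hderiv' : HasDerivAt (fun x => 3 * (x - a) ^ 2 * (b + c * x) + (x - a) ^ 3 * c)
      (6 * (t - a) * (b + c * (2 * t - a))) t := by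
    refine (((((hasDerivAt_id' t).sub_const a).fun_pow 2).const_mul 3).fun_mul
      (((hasDerivAt_id' t).const_mul c).const_add b)).fun_add
      ((((hasDerivAt_id' t).sub_const a).fun_pow 3).mul_const c) |>.congr_deriv ?_
    push_cast
    ring
  simp only [hg, iteratedDeriv_succ, iteratedDeriv_zero]
  rw [funext fun x => (hderiv x).deriv]
  exact hderiv'.deriv

theorem nonneg_of_affine_of_nonneg_endpoints {g : ℝ → ℝ} {b c p q s : ℝ}
    (hg : ∀ x, g x = b + c * x) (hp : 0 ≤ g p) (hq : 0 ≤ g q) (hs : s ∈ Set.Icc p q) :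
    0 ≤ g s := by
  rw [hg] at hp hq ⊢
  rcases le_total 0 c with hc | hc
  · nlinarith [hs.1]
  · nlinarith [hs.2]

theorem pi_sub_four_mul_mul_sin_le_six_mul_cos {δ : ℝ} (h0 : 0 ≤ δ) (h1 : δ ≤ 1 / 2) :
    (π - 4 * δ) * sin δ ≤ 6 * cos δ := by
  have hsin_nonneg : 0 ≤ sin δ := sin_nonneg_of_nonneg_of_le_pi h0 (by linarith [pi_gt_three])
  have hsin_le : sin δ ≤ δ := sin_le h0
  have hcos : 1 - δ ^ 2 / 2 ≤ cos δ := one_sub_sq_div_two_le_cos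
  calc (π - 4 * δ) * sin δ ≤ π * δ := by nlinarith [pi_pos]
    _ ≤ 6 * (1 - δ ^ 2 / 2) := by nlinarith [pi_lt_d2]
    _ ≤ 6 * cos δ := by linarith

noncomputable def eps0Factor (δ s : ℝ) : ℝ :=
  12 * (π - 3 * δ - s) * cos δ - (π - 4 * δ) * (2 * π - 5 * δ - 3 * s) * sin δ

theorem eps0Factor_eq (δ s : ℝ) :
    eps0Factor δ s = eps0Factor δ 0 + (3 * (π - 4 * δ) * sin δ - 12 * cos δ) * s := by
  unfold eps0Factor; ring

theorem eps0Factor_self (δ : ℝ) :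
    eps0Factor δ δ = (π - 4 * δ) * (12 * cos δ - 2 * (π - 4 * δ) * sin δ) := by
  unfold eps0Factor; ring

theorem eps0Factor_pi_sub_three_mul (δ : ℝ) :
    eps0Factor δ (π - 3 * δ) = (π - 4 * δ) ^ 2 * sin δ := by
  unfold eps0Factor; ring

theorem eps0Factor_nonneg {δ s : ℝ} (h0 : 0 ≤ δ) (h1 : δ ≤ 1 / 2)
    (hs : s ∈ Set.Icc δ (π - 3 * δ)) : 0 ≤ eps0Factor δ s := by
  have hπ : 0 ≤ π - 4 * δ := by linarith [pi_gt_three]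
  have hsin : 0 ≤ sin δ := sin_nonneg_of_nonneg_of_le_pi h0 (by linarith [pi_gt_three])
  refine nonneg_of_affine_of_nonneg_endpoints (eps0Factor_eq δ) ?_ ?_ hs
  · rw [eps0Factor_self]
    exact mul_nonneg hπ (by linarith [pi_sub_four_mul_mul_sin_le_six_mul_cos h0 h1])
  · rw [eps0Factor_pi_sub_three_mul]
    positivity

theorem iteratedDeriv_two_eps0 (δ t : ℝ) :
    iteratedDeriv 2 (eps0 δ) t =
      6 * (t - δ) * eps0Factor δ (2 * t - δ) / (3 * (π - 4 * δ) ^ 3) := by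
  change iteratedDeriv 2 (fun x => (x - δ) ^ 3 * eps0Factor δ x / (3 * (π - 4 * δ) ^ 3)) t = _
  rw [iteratedDeriv_div_const, iteratedDeriv_two_cube_mul_affine (eps0Factor_eq δ)]

/-- For all sufficiently small `δ > 0`, the function `ε₀` is convex on `[δ, π/2 - δ]`:
its second derivative is nonnegative there. -/
theorem stmt_11 :
    ∃ δ₀ : ℝ, 0 < δ₀ ∧ δ₀ < π / 4 ∧
      ∀ δ ∈ Set.Ioo (0 : ℝ) δ₀, ∀ t ∈ Set.Icc δ (π / 2 - δ),
        0 ≤ iteratedDeriv 2 (eps0 δ) t := by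
  refine ⟨1 / 2, by norm_num, by linarith [pi_gt_three], ?_⟩
  rintro δ ⟨hδ0, hδ1⟩ t ⟨hδt, htπ⟩
  have hD : 0 < π - 4 * δ := by linarith [pi_gt_three]
  have ht : 0 ≤ t - δ := by linarith
  have hℓ : 0 ≤ eps0Factor δ (2 * t - δ) :=
    eps0Factor_nonneg hδ0.le hδ1.le ⟨by linarith, by linarith⟩
  rw [iteratedDeriv_two_eps0]
  positivity
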